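/- A point x ∈ {0,1}^n is a local optimum of DLB_k with respect to the Hamming-distance-1 neighbourhood (i.e., no y ∈ {0,1}^n differing from x in exactly one bit satisfies DLB_k(y) > DLB_k(x)) if and only if x is the all-ones string, or there exists j ∈ [0..n/k−1] such that the first j blocks of x are all-ones and the (j+1)-st block of x is all-zeros (the bits in positions beyond the (j+1)-st block being arbitrary). -/

import Mathlib

open Finset
open scoped ENNReal

noncomputable section

/-- Bit strings of length `n`. -/
abbrev BitStr (n : ℕ) := Fin n → Bool

/-- The all-ones string. -/
def allOnes (n : ℕ) : BitStr n := fun _ => true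

/-- The number of ones in the `ℓ`-th block (`0`-indexed), i.e. among the
(`0`-indexed) positions `ℓ*k, …, ℓ*k + k - 1`. -/
def blockOnes (k n : ℕ) (x : BitStr n) (ℓ : ℕ) : ℕ :=
  (Finset.univ.filter fun i : Fin n => ℓ * k ≤ i.1 ∧ i.1 < ℓ * k + k ∧ x i = true).card

/-- The number of leading all-ones blocks of `x` (at most `n / k`).  For
`x ≠ allOnes n` (and `k ∣ n`) this is `c(x) - 1`, the (`0`-indexed) index of the
critical block. -/
def leadBlocks (k n : ℕ) (x : BitStr n) : ℕ :=
  Nat.findGreatest (fun j => ∀ ℓ < j, blockOnes k n x ℓ = k) (n / k)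

/-- The DeceptiveLeadingBlocks function with block length `k`:
`DLB_k(x) = k (c(x) - 1) + (k - 1 - ‖x_{B_{c(x)}}‖₁)` for `x` not the all-ones
string, and `DLB_k` of the all-ones string is `n`. -/
def dlb (k n : ℕ) (x : BitStr n) : ℕ :=
  if x = allOnes n then n
  else k * leadBlocks k n x + (k - 1 - blockOnes k n x (leadBlocks k n x))

lemma blockOnes_le (k n : ℕ) (x : BitStr n) (ℓ : ℕ) : blockOnes k n x ℓ ≤ k := by
  classical
  have h : (Finset.univ.filter fun i : Fin n => ℓ * k ≤ i.1 ∧ i.1 < ℓ * k + k ∧ x i = true).card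
      ≤ (Finset.range k).card := by
    apply Finset.card_le_card_of_injOn (fun i => i.1 - ℓ * k)
    · intro i hi
      simp only [Finset.mem_coe, Finset.mem_filter, Finset.mem_univ, true_and] at hi
      simp only [Finset.mem_coe, Finset.mem_range]
      omega
    · intro a ha b hb hab
      simp only [Finset.coe_filter, Set.mem_setOf_eq] at ha hb
      dsimp only at hab
      exact Fin.ext (by omega)
  simpa [blockOnes] using h

lemma card_blockSet (k n ℓ : ℕ) (h : ℓ * k + k ≤ n) :
    (Finset.univ.filter fun i : Fin n => ℓ * k ≤ i.1 ∧ i.1 < ℓ * k + k).card = k := by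
  classical
  have himg : (Finset.univ.filter fun i : Fin n => ℓ * k ≤ i.1 ∧ i.1 < ℓ * k + k)
      = Finset.image (fun m : Fin k => (⟨ℓ * k + m.1, by omega⟩ : Fin n)) Finset.univ := by
    ext i
    simp only [Finset.mem_filter, Finset.mem_univ, true_and, Finset.mem_image]
    constructor
    · rintro ⟨h1, h2⟩
      exact ⟨⟨i.1 - ℓ * k, by omega⟩, Fin.ext (by simp; omega)⟩
    · rintro ⟨m, rfl⟩
      exact ⟨by simp, by simpa using m.2⟩
  have hinj : Function.Injective (fun m : Fin k => (⟨ℓ * k + m.1, by omega⟩ : Fin n)) := by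
    intro a b hab
    have h2 : ℓ * k + a.1 = ℓ * k + b.1 := congrArg Fin.val hab
    exact Fin.ext (by omega)
  rw [himg, Finset.card_image_of_injective _ hinj]
  simp

lemma blockOnes_eq_k_iff (k n ℓ : ℕ) (x : BitStr n) (h : ℓ * k + k ≤ n) :
    blockOnes k n x ℓ = k ↔
      ∀ i : Fin n, ℓ * k ≤ i.1 → i.1 < ℓ * k + k → x i = true := by
  classical
  constructor
  · intro hb i h1 h2
    have hsub : (Finset.univ.filter fun i : Fin n => ℓ * k ≤ i.1 ∧ i.1 < ℓ * k + k ∧ x i = true)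
        ⊆ (Finset.univ.filter fun i : Fin n => ℓ * k ≤ i.1 ∧ i.1 < ℓ * k + k) := by
      intro a ha; simp only [Finset.mem_filter] at ha ⊢; tauto
    have heq := Finset.eq_of_subset_of_card_le hsub ((card_blockSet k n ℓ h).le.trans hb.ge)
    have hmem : i ∈ (Finset.univ.filter fun i : Fin n => ℓ * k ≤ i.1 ∧ i.1 < ℓ * k + k ∧ x i = true) := by
      rw [heq]; simp [h1, h2]
    simp only [Finset.mem_filter] at hmem; tauto
  · intro hall
    have hfe : (Finset.univ.filter fun i : Fin n => ℓ * k ≤ i.1 ∧ i.1 < ℓ * k + k ∧ x i = true)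
        = (Finset.univ.filter fun i : Fin n => ℓ * k ≤ i.1 ∧ i.1 < ℓ * k + k) := by
      apply Finset.filter_congr
      intro i _
      constructor
      · tauto
      · rintro ⟨h1, h2⟩; exact ⟨h1, h2, hall i h1 h2⟩
    rw [blockOnes, hfe, card_blockSet k n ℓ h]

lemma blockOnes_eq_zero_iff (k n ℓ : ℕ) (x : BitStr n) :
    blockOnes k n x ℓ = 0 ↔
      ∀ i : Fin n, ℓ * k ≤ i.1 → i.1 < ℓ * k + k → x i = false := by
  classical
  rw [blockOnes, Finset.card_eq_zero, Finset.filter_eq_empty_iff]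
  constructor
  · intro h i h1 h2
    have := h (Finset.mem_univ i)
    simp only [not_and] at this
    have := this h1 h2
    simpa using this
  · intro h i _
    simp only [not_and]
    intro h1 h2
    simp [h i h1 h2]

lemma leadBlocks_le (k n : ℕ) (x : BitStr n) : leadBlocks k n x ≤ n / k :=
  Nat.findGreatest_le _

lemma leadBlocks_spec (k n : ℕ) (x : BitStr n) :
    ∀ ℓ < leadBlocks k n x, blockOnes k n x ℓ = k := by
  rcases Nat.eq_zero_or_pos (leadBlocks k n x) with h | h
  · intro ℓ hℓ; omega
  · exact Nat.findGreatest_of_ne_zero rfl h.ne'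

lemma leadBlocks_eq (k n j : ℕ) (x : BitStr n) (hj : j ≤ n / k)
    (hfull : ∀ ℓ < j, blockOnes k n x ℓ = k)
    (hstop : j = n / k ∨ blockOnes k n x j ≠ k) : leadBlocks k n x = j := by
  have h1 : j ≤ leadBlocks k n x := Nat.le_findGreatest hj hfull
  rcases hstop with rfl | hne
  · exact le_antisymm (leadBlocks_le k n x) h1
  · by_contra hne2
    have hlt : j < leadBlocks k n x := by omega
    exact hne (leadBlocks_spec k n x j hlt)

lemma block_in_range (k n ℓ : ℕ) (hk : 0 < k) (hdvd : k ∣ n) (hℓ : ℓ < n / k) :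
    ℓ * k + k ≤ n := by
  have h1 : (ℓ + 1) * k ≤ (n / k) * k := Nat.mul_le_mul_right k hℓ
  have h2 : (n / k) * k = n := Nat.div_mul_cancel hdvd
  have h3 : (ℓ + 1) * k = ℓ * k + k := by ring
  omega

lemma allOnes_iff (k n : ℕ) (hk : 0 < k) (hdvd : k ∣ n) (x : BitStr n) :
    x = allOnes n ↔ leadBlocks k n x = n / k := by
  constructor
  · rintro rfl
    apply leadBlocks_eq k n (n / k) _ le_rfl _ (Or.inl rfl)
    intro ℓ hℓ
    rw [blockOnes_eq_k_iff k n ℓ _ (block_in_range k n ℓ hk hdvd hℓ)]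
    intro i _ _; rfl
  · intro h
    funext i
    have hi := i.2
    have hℓ : i.1 / k < n / k := Nat.div_lt_div_of_lt_of_dvd hdvd hi
    have hfull := leadBlocks_spec k n x (i.1 / k) (by omega)
    rw [blockOnes_eq_k_iff k n _ x (block_in_range k n _ hk hdvd hℓ)] at hfull
    have hd := Nat.div_add_mod i.1 k
    have hm := Nat.mod_lt i.1 hk
    have hc : (i.1 / k) * k = k * (i.1 / k) := Nat.mul_comm _ _
    exact hfull i (by omega) (by omega)

lemma ne_allOnes_of_block (k n ℓ : ℕ) (x : BitStr n) (h : ℓ * k + k ≤ n)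
    (hne : blockOnes k n x ℓ ≠ k) : x ≠ allOnes n := by
  rintro rfl
  exact hne ((blockOnes_eq_k_iff k n ℓ _ h).2 fun i _ _ => rfl)

lemma leadBlocks_lt_of_ne (k n : ℕ) (hk : 0 < k) (hdvd : k ∣ n) (x : BitStr n)
    (hx : x ≠ allOnes n) : leadBlocks k n x < n / k :=
  lt_of_le_of_ne (leadBlocks_le k n x) (fun h => hx ((allOnes_iff k n hk hdvd x).2 h))

lemma blockOnes_critical_ne (k n : ℕ) (x : BitStr n)
    (h : leadBlocks k n x < n / k) : blockOnes k n x (leadBlocks k n x) ≠ k := by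
  intro hfull
  have hP : ∀ ℓ < leadBlocks k n x + 1, blockOnes k n x ℓ = k := by
    intro ℓ hℓ
    rcases Nat.lt_succ_iff_lt_or_eq.1 hℓ with h' | rfl
    · exact leadBlocks_spec k n x ℓ h'
    · exact hfull
  exact Nat.findGreatest_is_greatest (Nat.lt_succ_self _) h hP

lemma dlb_of_ne (k n : ℕ) (x : BitStr n) (hx : x ≠ allOnes n) :
    dlb k n x = k * leadBlocks k n x + (k - 1 - blockOnes k n x (leadBlocks k n x)) :=
  if_neg hx

lemma dlb_lt_n (k n : ℕ) (hk : 0 < k) (hdvd : k ∣ n) (x : BitStr n)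
    (hx : x ≠ allOnes n) : dlb k n x < n := by
  have hj := leadBlocks_lt_of_ne k n hk hdvd x hx
  rw [dlb_of_ne k n x hx]
  have h1 : k * (leadBlocks k n x + 1) ≤ k * (n / k) := Nat.mul_le_mul_left k hj
  have h2 : k * (n / k) = n := Nat.mul_div_cancel' hdvd
  have h3 := blockOnes_le k n x (leadBlocks k n x)
  have h4 : k * (leadBlocks k n x + 1) = k * leadBlocks k n x + k := by ring
  omega

lemma blockOnes_flip_out (k n : ℕ) (x y : BitStr n) (i₀ : Fin n)
    (hy : ∀ i, i ≠ i₀ → y i = x i) (ℓ : ℕ)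
    (hout : ¬ (ℓ * k ≤ i₀.1 ∧ i₀.1 < ℓ * k + k)) :
    blockOnes k n y ℓ = blockOnes k n x ℓ := by
  unfold blockOnes
  congr 1
  apply Finset.filter_congr
  intro i _
  by_cases hi : i = i₀
  · subst hi
    constructor <;> (rintro ⟨h1, h2, _⟩; exact absurd ⟨h1, h2⟩ hout)
  · rw [hy i hi]

lemma blockOnes_flip_to_false (k n : ℕ) (x y : BitStr n) (i₀ : Fin n)
    (hy : ∀ i, i ≠ i₀ → y i = x i) (hy0 : y i₀ = false) (hx0 : x i₀ = true)
    (ℓ : ℕ) (hin : ℓ * k ≤ i₀.1 ∧ i₀.1 < ℓ * k + k) :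
    blockOnes k n y ℓ + 1 = blockOnes k n x ℓ := by
  classical
  have hmem : i₀ ∈ (Finset.univ.filter fun i : Fin n => ℓ * k ≤ i.1 ∧ i.1 < ℓ * k + k ∧ x i = true) := by
    simp [hin.1, hin.2, hx0]
  have hfe : (Finset.univ.filter fun i : Fin n => ℓ * k ≤ i.1 ∧ i.1 < ℓ * k + k ∧ y i = true)
      = (Finset.univ.filter fun i : Fin n => ℓ * k ≤ i.1 ∧ i.1 < ℓ * k + k ∧ x i = true).erase i₀ := by
    ext i
    simp only [Finset.mem_filter, Finset.mem_univ, true_and, Finset.mem_erase]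
    by_cases hi : i = i₀
    · subst hi; simp [hy0]
    · rw [hy i hi]; tauto
  rw [blockOnes, hfe, Finset.card_erase_of_mem hmem, blockOnes]
  have : 0 < (Finset.univ.filter fun i : Fin n => ℓ * k ≤ i.1 ∧ i.1 < ℓ * k + k ∧ x i = true).card :=
    Finset.card_pos.2 ⟨i₀, hmem⟩
  omega

lemma blockOnes_flip_to_true (k n : ℕ) (x y : BitStr n) (i₀ : Fin n)
    (hy : ∀ i, i ≠ i₀ → y i = x i) (hy0 : y i₀ = true) (hx0 : x i₀ = false)
    (ℓ : ℕ) (hin : ℓ * k ≤ i₀.1 ∧ i₀.1 < ℓ * k + k) :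
    blockOnes k n y ℓ = blockOnes k n x ℓ + 1 := by
  classical
  have hmem : i₀ ∉ (Finset.univ.filter fun i : Fin n => ℓ * k ≤ i.1 ∧ i.1 < ℓ * k + k ∧ x i = true) := by
    simp [hx0]
  have hfe : (Finset.univ.filter fun i : Fin n => ℓ * k ≤ i.1 ∧ i.1 < ℓ * k + k ∧ y i = true)
      = insert i₀ (Finset.univ.filter fun i : Fin n => ℓ * k ≤ i.1 ∧ i.1 < ℓ * k + k ∧ x i = true) := by
    ext i
    simp only [Finset.mem_filter, Finset.mem_univ, true_and, Finset.mem_insert]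
    by_cases hi : i = i₀
    · subst hi; simp [hy0, hin.1, hin.2]
    · rw [hy i hi]; tauto
  rw [blockOnes, hfe, Finset.card_insert_of_notMem hmem, blockOnes]

lemma blocks_full_of_pointwise (k n j : ℕ) (hk : 0 < k) (hdvd : k ∣ n) (hj : j ≤ n / k)
    (x : BitStr n) (hone : ∀ i : Fin n, i.1 < j * k → x i = true) :
    ∀ ℓ < j, blockOnes k n x ℓ = k := by
  intro ℓ hℓ
  rw [blockOnes_eq_k_iff k n ℓ x (block_in_range k n ℓ hk hdvd (by omega))]
  intro i h1 h2
  apply hone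
  have ha : (ℓ + 1) * k ≤ j * k := Nat.mul_le_mul_right k hℓ
  have hb : (ℓ + 1) * k = ℓ * k + k := by ring
  omega

/-- A point `x ∈ {0,1}^n` is a local optimum of `DLB_k` with respect to the
Hamming-distance-1 neighbourhood iff `x` is the all-ones string or there is
`j ∈ [0 .. n/k - 1]` such that the first `j` blocks of `x` are all-ones and the
`(j+1)`-st block of `x` is all-zeros (the remaining bits being arbitrary). -/
theorem dlb_local_opt_iff (k n : ℕ) (hk : 2 ≤ k) (hn : 0 < n) (hdvd : k ∣ n)
    (x : BitStr n) :
    (¬ ∃ y : BitStr n,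
        (Finset.univ.filter fun i : Fin n => y i ≠ x i).card = 1 ∧
        dlb k n x < dlb k n y) ↔
      (x = allOnes n ∨
        ∃ j < n / k, (∀ i : Fin n, i.1 < j * k → x i = true) ∧
          (∀ i : Fin n, j * k ≤ i.1 → i.1 < j * k + k → x i = false)) := by
  classical
  have hk0 : 0 < k := by omega
  constructor
  · -- local optimum → structure
    intro hloc
    by_contra hR
    push_neg at hR
    obtain ⟨hx, hR2⟩ := hR
    set j := leadBlocks k n x with hjdef
    have hjlt : j < n / k := leadBlocks_lt_of_ne k n hk0 hdvd x hx
    have hfull : ∀ ℓ < j, blockOnes k n x ℓ = k := leadBlocks_spec k n x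
    have hB : ∀ i : Fin n, i.1 < j * k → x i = true := by
      intro i hi
      set ℓ := i.1 / k with hℓdef
      have hℓ : ℓ < j := (Nat.div_lt_iff_lt_mul hk0).2 hi
      have hd : k * ℓ + i.1 % k = i.1 := Nat.div_add_mod i.1 k
      have hm := Nat.mod_lt i.1 hk0
      have hc : ℓ * k = k * ℓ := Nat.mul_comm _ _
      have := (blockOnes_eq_k_iff k n ℓ x
        (block_in_range k n ℓ hk0 hdvd (by omega))).1 (hfull ℓ hℓ)
      exact this i (by omega) (by omega)
    have hC := hR2 j hjlt hB
    obtain ⟨i₀, h1, h2, h3⟩ := hC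
    have hx0 : x i₀ = true := by
      revert h3; cases x i₀ <;> simp
    set y : BitStr n := fun i => if i = i₀ then false else x i with hydef
    have hy : ∀ i, i ≠ i₀ → y i = x i := fun i hi => if_neg hi
    have hy0 : y i₀ = false := if_pos rfl
    have hfy : (Finset.univ.filter fun i : Fin n => y i ≠ x i) = {i₀} := by
      ext i
      simp only [Finset.mem_filter, Finset.mem_univ, true_and, Finset.mem_singleton]
      by_cases hi : i = i₀
      · subst hi; simp [hy0, hx0]
      · exact iff_of_false (by simp [hy i hi]) hi
    have hyfull : ∀ ℓ < j, blockOnes k n y ℓ = k := by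
      intro ℓ hℓ
      rw [blockOnes_flip_out k n x y i₀ hy ℓ (by
        have ha : (ℓ + 1) * k ≤ j * k := Nat.mul_le_mul_right k hℓ
        have hb : (ℓ + 1) * k = ℓ * k + k := by ring
        omega)]
      exact hfull ℓ hℓ
    have hbj : blockOnes k n y j + 1 = blockOnes k n x j :=
      blockOnes_flip_to_false k n x y i₀ hy hy0 hx0 j ⟨h1, h2⟩
    have hcrit : blockOnes k n x j ≠ k := blockOnes_critical_ne k n x hjlt
    have hble := blockOnes_le k n x j
    have hyj : blockOnes k n y j ≠ k := by omega
    have hylead : leadBlocks k n y = j :=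
      leadBlocks_eq k n j y (by omega) hyfull (Or.inr hyj)
    have hyne : y ≠ allOnes n :=
      ne_allOnes_of_block k n j y (block_in_range k n j hk0 hdvd hjlt) (hylead ▸ hyj)
    apply hloc
    refine ⟨y, by rw [hfy]; simp, ?_⟩
    rw [dlb_of_ne k n x hx, dlb_of_ne k n y hyne, hylead, ← hjdef]
    omega
  · rintro (rfl | ⟨j, hjlt, hone, hzero⟩)
    · rintro ⟨y, hcard, hlt⟩
      have hyne : y ≠ allOnes n := by
        intro h
        rw [h] at hcard
        simp at hcard
      have h1 : dlb k n (allOnes n) = n := if_pos rfl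
      have h2 : dlb k n y < n := dlb_lt_n k n hk0 hdvd y hyne
      omega
    · rintro ⟨y, hcard, hlt⟩
      have hBfull : ∀ ℓ < j, blockOnes k n x ℓ = k :=
        blocks_full_of_pointwise k n j hk0 hdvd (by omega) x hone
      have hB0 : blockOnes k n x j = 0 := (blockOnes_eq_zero_iff k n j x).2 hzero
      have hlead : leadBlocks k n x = j :=
        leadBlocks_eq k n j x (by omega) hBfull (Or.inr (by omega))
      have hxne : x ≠ allOnes n :=
        ne_allOnes_of_block k n j x (block_in_range k n j hk0 hdvd hjlt) (by omega)
      obtain ⟨i₀, hi₀⟩ := Finset.card_eq_one.1 hcard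
      have hy : ∀ i, i ≠ i₀ → y i = x i := by
        intro i hi
        by_contra hne
        have : i ∈ (Finset.univ.filter fun i : Fin n => y i ≠ x i) := by
          simp [hne]
        rw [hi₀] at this
        simp at this
        exact hi this
      have hne0 : y i₀ ≠ x i₀ := by
        have : i₀ ∈ (Finset.univ.filter fun i : Fin n => y i ≠ x i) := by
          rw [hi₀]; simp
        simpa using this
      set ℓ₀ := i₀.1 / k with hℓ₀def
      have hd : k * ℓ₀ + i₀.1 % k = i₀.1 := Nat.div_add_mod i₀.1 k
      have hm := Nat.mod_lt i₀.1 hk0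
      have hc : ℓ₀ * k = k * ℓ₀ := Nat.mul_comm _ _
      have hℓ₀lt : ℓ₀ < n / k := Nat.div_lt_div_of_lt_of_dvd hdvd i₀.2
      have hin : ℓ₀ * k ≤ i₀.1 ∧ i₀.1 < ℓ₀ * k + k := ⟨by omega, by omega⟩
      have hdx : dlb k n x = k * j + (k - 1 - 0) := by
        rw [dlb_of_ne k n x hxne, hlead, hB0]
      rcases lt_trichotomy ℓ₀ j with hcase | hcase | hcase
      · -- flip inside a full block
        have hx0 : x i₀ = true := by
          apply hone
          have ha : (ℓ₀ + 1) * k ≤ j * k := Nat.mul_le_mul_right k hcase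
          have hb : (ℓ₀ + 1) * k = ℓ₀ * k + k := by ring
          omega
        have hy0 : y i₀ = false := by
          revert hne0; rw [hx0]; cases y i₀ <;> simp
        have hyfull : ∀ ℓ < ℓ₀, blockOnes k n y ℓ = k := by
          intro ℓ hℓ
          rw [blockOnes_flip_out k n x y i₀ hy ℓ (by
            have ha : (ℓ + 1) * k ≤ ℓ₀ * k := Nat.mul_le_mul_right k hℓ
            have hb : (ℓ + 1) * k = ℓ * k + k := by ring
            omega)]
          exact hBfull ℓ (by omega)
        have hbℓ₀ : blockOnes k n y ℓ₀ + 1 = blockOnes k n x ℓ₀ :=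
          blockOnes_flip_to_false k n x y i₀ hy hy0 hx0 ℓ₀ hin
        have hfullℓ₀ := hBfull ℓ₀ hcase
        have hyℓ₀ : blockOnes k n y ℓ₀ = k - 1 := by omega
        have hylead : leadBlocks k n y = ℓ₀ :=
          leadBlocks_eq k n ℓ₀ y (by omega) hyfull (Or.inr (by omega))
        have hyne : y ≠ allOnes n :=
          ne_allOnes_of_block k n ℓ₀ y (block_in_range k n ℓ₀ hk0 hdvd hℓ₀lt) (by omega)
        rw [dlb_of_ne k n y hyne, hylead, hyℓ₀, hdx] at hlt
        have hmul : k * ℓ₀ ≤ k * j := Nat.mul_le_mul_left k (by omega)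
        omega
      · -- flip inside the all-zero block
        subst hcase
        have hx0 : x i₀ = false := hzero i₀ (by omega) (by omega)
        have hy0 : y i₀ = true := by
          revert hne0; rw [hx0]; cases y i₀ <;> simp
        have hyfull : ∀ ℓ < ℓ₀, blockOnes k n y ℓ = k := by
          intro ℓ hℓ
          rw [blockOnes_flip_out k n x y i₀ hy ℓ (by
            have ha : (ℓ + 1) * k ≤ ℓ₀ * k := Nat.mul_le_mul_right k hℓ
            have hb : (ℓ + 1) * k = ℓ * k + k := by ring
            omega)]
          exact hBfull ℓ hℓ
        have hbℓ₀ : blockOnes k n y ℓ₀ = blockOnes k n x ℓ₀ + 1 :=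
          blockOnes_flip_to_true k n x y i₀ hy hy0 hx0 ℓ₀ hin
        have hyℓ₀ : blockOnes k n y ℓ₀ = 1 := by omega
        have hylead : leadBlocks k n y = ℓ₀ :=
          leadBlocks_eq k n ℓ₀ y (by omega) hyfull (Or.inr (by omega))
        have hyne : y ≠ allOnes n :=
          ne_allOnes_of_block k n ℓ₀ y (block_in_range k n ℓ₀ hk0 hdvd hℓ₀lt) (by omega)
        rw [dlb_of_ne k n y hyne, hylead, hyℓ₀, hdx] at hlt
        omega
      · -- flip beyond the critical block
        have hyeq : ∀ ℓ ≤ j, blockOnes k n y ℓ = blockOnes k n x ℓ := by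
          intro ℓ hℓ
          apply blockOnes_flip_out k n x y i₀ hy ℓ
          have ha : (ℓ + 1) * k ≤ ℓ₀ * k := Nat.mul_le_mul_right k (by omega)
          have hb : (ℓ + 1) * k = ℓ * k + k := by ring
          omega
        have hyfull : ∀ ℓ < j, blockOnes k n y ℓ = k := by
          intro ℓ hℓ
          rw [hyeq ℓ (by omega)]
          exact hBfull ℓ hℓ
        have hyj : blockOnes k n y j = 0 := by rw [hyeq j le_rfl]; exact hB0
        have hylead : leadBlocks k n y = j :=
          leadBlocks_eq k n j y (by omega) hyfull (Or.inr (by omega))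
        have hyne : y ≠ allOnes n :=
          ne_allOnes_of_block k n j y (block_in_range k n j hk0 hdvd hjlt) (by omega)
        rw [dlb_of_ne k n y hyne, hylead, hyj, hdx] at hlt
        omega

end
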